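/- Let Q0, Q1 be left-continuous quantile functions of cdfs F0, F1, let 0 ≤ a < b ≤ 1, U ~ Uniform(0,1), Y0 = Q0(U), and Y1 a random variable with cdf F1 under any coupling. For every nondecreasing concave h : ℝ → ℝ (with integrability), E[h(Q1(b - U) - Q0(U)) · 1{a < U < b}] ≤ E[h(Y1 - Y0) · 1{a < U < b}]. -/

import Mathlib

/-!
Write `X = Q1 (b - U) - Q0 U` and `Z = Y1 - Q0 U` on the event `a < U < b`. For each level `s`,
Tonelli turns `E[(s - Z)⁺; a < U < b]` into `∫ μ(a < U < b, Y1 ≤ r < s + Q0 U) dr`. Through the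
Galois connection `Q u ≤ y ↔ u ≤ F y` the integrand is at most
`min (F1 r) (b - max a (F0 (r - s)))`, and this is the measure of the same event with `Y1` replaced
by `Q1 (b - U)`. Hence `E[(s - Z)⁺] ≤ E[(s - X)⁺]` for every `s`, i.e. the inequality holds for
`h = min (· - s) 0`, hence for every `C - ∑ cⱼ (sⱼ - ·)⁺` with `cⱼ ≥ 0`. A nondecreasing concave `h`
is the pointwise limit of such piecewise linear interpolants, dominated by `|h| + const`, and
dominated convergence finishes the proof.
-/

open MeasureTheory Set Filter Function

noncomputable section

def IsCDF (F : ℝ → ℝ) : Prop :=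
  Monotone F ∧ (∀ y, ContinuousWithinAt F (Set.Ici y) y) ∧
    Tendsto F atBot (nhds 0) ∧ Tendsto F atTop (nhds 1)

open Finset Topology

theorem ConcaveOn.slope_le_slope {s : Set ℝ} {f : ℝ → ℝ} (hf : ConcaveOn ℝ s f)
    {x₁ y₁ x₂ y₂ : ℝ} (hx₁ : x₁ ∈ s) (hy₁ : y₁ ∈ s) (hx₂ : x₂ ∈ s) (hy₂ : y₂ ∈ s)
    (h₁ : x₁ < y₁) (h₂ : x₂ < y₂) (hx : x₁ ≤ x₂) (hy : y₁ ≤ y₂) :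
    slope f x₂ y₂ ≤ slope f x₁ y₁ :=
  calc slope f x₂ y₂ = slope f y₂ x₂ := slope_comm f x₂ y₂
    _ ≤ slope f y₂ x₁ := hf.slope_anti hy₂ ⟨hx₁, (h₁.trans_le hy).ne⟩ ⟨hx₂, h₂.ne⟩ hx
    _ = slope f x₁ y₂ := slope_comm f y₂ x₁
    _ ≤ slope f x₁ y₁ := hf.slope_anti hx₁ ⟨hy₁, h₁.ne'⟩ ⟨hy₂, (h₁.trans_le hy).ne'⟩ hy

theorem ConcaveOn.le_max_add {f : ℝ → ℝ} (hf : ConcaveOn ℝ univ f) (hm : Monotone f)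
    {d : ℝ} (hd : 0 ≤ d) (z : ℝ) : f (z + d) ≤ max (f z) (f 0) + (f d - f 0) := by
  rcases lt_or_ge z 0 with hz | hz
  · have := hm (by linarith : z + d ≤ d)
    linarith [le_max_right (f z) (f 0)]
  rcases hd.eq_or_lt with rfl | hd
  · simp
  rcases hz.eq_or_lt with rfl | hz
  · simp
  have hs := hf.slope_le_slope (mem_univ 0) (mem_univ d) (mem_univ z) (mem_univ (z + d))
    hd (by linarith) hz.le (by linarith)
  rw [slope_def_field, slope_def_field, add_sub_cancel_left, sub_zero,
    div_le_div_iff_of_pos_right hd] at hs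
  linarith [le_max_left (f z) (f 0)]

/-- With `c ≥ 0` these are exactly the nondecreasing concave piecewise linear functions that are
eventually constant. -/
def hingeSum (C : ℝ) (c s : ℕ → ℝ) (K : ℕ) (z : ℝ) : ℝ :=
  C - ∑ j ∈ range K, c j * (s j - z)⁺

theorem continuous_hingeSum (C : ℝ) (c s : ℕ → ℝ) (K : ℕ) :
    Continuous (hingeSum C c s K) := by
  unfold hingeSum posPart
  fun_prop

section Interpolation

variable {g : ℝ → ℝ} {t : ℕ → ℝ} {K k : ℕ} {z : ℝ}

def chordSlope (g : ℝ → ℝ) (t : ℕ → ℝ) (K j : ℕ) : ℝ :=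
  if j < K then slope g (t j) (t (j + 1)) else 0

/-- The interpolant of `g` at the nodes `t 0 ≤ ⋯ ≤ t K`, continued affinely to the left of `t 0`
and constantly to the right of `t K`. -/
def pwLinInterp (g : ℝ → ℝ) (t : ℕ → ℝ) (K : ℕ) : ℝ → ℝ :=
  hingeSum (g (t K)) (fun j ↦ chordSlope g t K j - chordSlope g t K (j + 1)) (fun j ↦ t (j + 1)) K

theorem chordSlope_nonneg (hg : Monotone g) (ht : Monotone t) (j : ℕ) :
    0 ≤ chordSlope g t K j := by
  unfold chordSlope
  split_ifs
  · rw [slope_def_field]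
    exact div_nonneg (sub_nonneg.2 (hg (ht j.le_succ))) (sub_nonneg.2 (ht j.le_succ))
  · rfl

theorem chordSlope_succ_le (hg : Monotone g) (hc : ConcaveOn ℝ univ g) (ht : StrictMono t)
    (j : ℕ) : chordSlope g t K (j + 1) ≤ chordSlope g t K j := by
  by_cases hj : j + 1 < K
  · rw [chordSlope, chordSlope, if_pos hj, if_pos (by omega)]
    exact hc.slope_le_slope (mem_univ _) (mem_univ _) (mem_univ _) (mem_univ _)
      (ht j.lt_succ_self) (ht (j + 1).lt_succ_self) (ht.monotone j.le_succ)
      (ht.monotone (j + 1).le_succ)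
  · rw [chordSlope, if_neg hj]
    exact chordSlope_nonneg hg ht.monotone j

theorem chordSlope_mul (hk : k < K) :
    chordSlope g t K k * (t (k + 1) - t k) = g (t (k + 1)) - g (t k) := by
  rw [chordSlope, if_pos hk, mul_comm, ← smul_eq_mul, sub_smul_slope, vsub_eq_sub]

theorem sum_Ico_chordSlope_mul (hk : k ≤ K) (z : ℝ) :
    ∑ j ∈ Ico k K, (chordSlope g t K j - chordSlope g t K (j + 1)) * (t (j + 1) - z)
      = g (t K) - g (t k) - chordSlope g t K k * (z - t k) := by
  induction hk using Nat.decreasingInduction with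
  | self => simp [chordSlope]
  | of_succ k hk ih =>
    rw [sum_eq_sum_Ico_succ_bot hk, ih]
    linear_combination chordSlope_mul (g := g) (t := t) hk

theorem pwLinInterp_eq (ht : Monotone t) (hk : k < K) (hleft : ∀ j < k, t (j + 1) ≤ z)
    (hz : z ≤ t (k + 1)) :
    pwLinInterp g t K z = g (t k) + chordSlope g t K k * (z - t k) := by
  have hsum : ∑ j ∈ range K, (chordSlope g t K j - chordSlope g t K (j + 1)) * (t (j + 1) - z)⁺
      = ∑ j ∈ Ico k K, (chordSlope g t K j - chordSlope g t K (j + 1)) * (t (j + 1) - z) := by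
    rw [← sum_range_add_sum_Ico _ hk.le, sum_eq_zero, zero_add]
    · refine sum_congr rfl fun j hj ↦ ?_
      rw [posPart_eq_self.2 (sub_nonneg.2 (hz.trans (ht (by simp at hj; omega))))]
    · intro j hj
      rw [posPart_eq_zero.2 (sub_nonpos.2 (hleft j (mem_range.1 hj))), mul_zero]
  rw [pwLinInterp, hingeSum, hsum, sum_Ico_chordSlope_mul hk.le]
  ring

theorem pwLinInterp_of_le (ht : Monotone t) (hz : t K ≤ z) :
    pwLinInterp g t K z = g (t K) := by
  rw [pwLinInterp, hingeSum, sub_eq_self]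
  refine sum_eq_zero fun j hj ↦ ?_
  rw [posPart_eq_zero.2 (sub_nonpos.2 ((ht (mem_range.1 hj)).trans hz)), mul_zero]

theorem pwLinInterp_mem_Icc_of_mem_Icc (hg : Monotone g) (ht : Monotone t) (hk : k < K)
    (hz : z ∈ Icc (t k) (t (k + 1))) :
    pwLinInterp g t K z ∈ Icc (g (t k)) (g (t (k + 1))) := by
  rw [pwLinInterp_eq ht hk (fun j hj ↦ (ht hj).trans hz.1) hz.2]
  have hσ := chordSlope_nonneg (K := K) hg ht k
  have := chordSlope_mul (g := g) (t := t) hk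
  constructor <;> nlinarith [hz.1, hz.2]

theorem pwLinInterp_mem_Icc_of_le (hg : Monotone g) (hc : ConcaveOn ℝ univ g) (ht : StrictMono t)
    (hK : 0 < K) (hz : z ≤ t 0) : pwLinInterp g t K z ∈ Icc (g z) (g (t 0)) := by
  rw [pwLinInterp_eq ht.monotone hK (fun j hj ↦ absurd hj j.not_lt_zero)
    (hz.trans (ht.monotone zero_le_one))]
  have hσ := chordSlope_nonneg (K := K) hg ht.monotone 0
  refine ⟨?_, by nlinarith⟩
  rcases hz.eq_or_lt with rfl | hz
  · simp
  have hs := hc.slope_le_slope (mem_univ z) (mem_univ (t 0)) (mem_univ (t 0)) (mem_univ (t 1))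
    hz (ht zero_lt_one) hz.le (ht.monotone zero_le_one)
  rw [chordSlope, if_pos hK]
  rw [slope_def_field g z, le_div_iff₀ (sub_pos.2 hz)] at hs
  linarith

end Interpolation

def gridPt (n j : ℕ) : ℝ := j / (n + 1) - (n + 1)

def gridLen (n : ℕ) : ℕ := 2 * (n + 1) ^ 2

/-- Interpolating `h` shifted by one mesh width puts the approximant above `h` on the grid, so that
it is bounded below by `min (h z) (h 0)`; the unshifted interpolant lies below `h` on the grid,
which gives no integrable lower bound. -/
def concaveApprox (h : ℝ → ℝ) (n : ℕ) : ℝ → ℝ :=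
  pwLinInterp (fun z ↦ h (z + 1 / (n + 1))) (gridPt n) (gridLen n)

section Grid

variable {h : ℝ → ℝ} {n : ℕ} {z : ℝ}

theorem gridPt_succ (n j : ℕ) : gridPt n (j + 1) = gridPt n j + 1 / (n + 1) := by
  simp only [gridPt]; push_cast; ring

theorem gridPt_strictMono (n : ℕ) : StrictMono (gridPt n) :=
  strictMono_nat_of_lt_succ fun j ↦ by
    rw [gridPt_succ]; linarith [Nat.one_div_pos_of_nat (α := ℝ) (n := n)]

theorem gridPt_zero (n : ℕ) : gridPt n 0 = -(n + 1) := by simp [gridPt]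

theorem gridPt_gridLen (n : ℕ) : gridPt n (gridLen n) = n + 1 := by
  simp only [gridPt, gridLen]; push_cast; field_simp; ring

theorem exists_gridPt_mem_Icc (hz₀ : -(n + 1 : ℝ) ≤ z) (hz₁ : z < n + 1) :
    ∃ k < gridLen n, z ∈ Icc (gridPt n k) (gridPt n (k + 1)) := by
  have hn : (0 : ℝ) < n + 1 := by positivity
  set x := (z + (n + 1)) * (n + 1)
  have hx : 0 ≤ x := mul_nonneg (by linarith) hn.le
  refine ⟨⌊x⌋₊, ?_, ?_, ?_⟩
  · refine (Nat.floor_lt hx).2 ?_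
    simp only [gridLen, x]; push_cast; nlinarith
  · rw [gridPt, sub_le_iff_le_add, div_le_iff₀ hn]
    linarith [Nat.floor_le hx]
  · rw [gridPt, le_sub_iff_add_le, le_div_iff₀ hn]
    push_cast
    linarith [Nat.lt_floor_add_one x]

end Grid

section Approx

variable {h : ℝ → ℝ} {n : ℕ} {z : ℝ}

theorem continuous_concaveApprox (h : ℝ → ℝ) (n : ℕ) : Continuous (concaveApprox h n) :=
  continuous_hingeSum _ _ _ _

theorem ConcaveOn.comp_add_const (hc : ConcaveOn ℝ univ h) (δ : ℝ) :
    ConcaveOn ℝ univ fun z ↦ h (z + δ) := by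
  have := hc.translate_left δ
  rwa [preimage_univ] at this

theorem concaveApprox_mem_Icc (hm : Monotone h) (hz₀ : -(n + 1 : ℝ) ≤ z) (hz₁ : z < n + 1) :
    concaveApprox h n z ∈ Icc (h z) (h (z + 2 / (n + 1))) := by
  obtain ⟨k, hk, hzk⟩ := exists_gridPt_mem_Icc hz₀ hz₁
  have hI := pwLinInterp_mem_Icc_of_mem_Icc (g := fun x ↦ h (x + 1 / (n + 1)))
    (fun _ _ hxy ↦ hm (by linarith)) (gridPt_strictMono n).monotone hk hzk
  rw [gridPt_succ] at hzk hI
  have h2δ : 2 / (n + 1 : ℝ) = 1 / (n + 1) + 1 / (n + 1) := by ring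
  exact ⟨(hm (by linarith [hzk.2])).trans hI.1, hI.2.trans (hm (by linarith [hzk.1]))⟩

theorem concaveApprox_bounds (hm : Monotone h) (hc : ConcaveOn ℝ univ h) (n : ℕ) (z : ℝ) :
    min (h z) (h 0) ≤ concaveApprox h n z ∧
      concaveApprox h n z ≤ max (h (z + 2 / (n + 1))) (h 0) := by
  have hδ : (0 : ℝ) < 1 / (n + 1) := Nat.one_div_pos_of_nat
  have hδ₁ : 1 / (n + 1 : ℝ) ≤ 1 := by
    rw [div_le_one (by positivity)]; linarith [n.cast_nonneg (α := ℝ)]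
  rcases lt_or_ge z (-(n + 1)) with hz | hz₀
  · have hI := pwLinInterp_mem_Icc_of_le (g := fun x ↦ h (x + 1 / (n + 1))) (K := gridLen n)
      (fun _ _ hxy ↦ hm (by linarith)) (hc.comp_add_const _) (gridPt_strictMono n)
      (Nat.pos_of_ne_zero (by simp [gridLen])) (hz.le.trans (gridPt_zero n).ge)
    rw [gridPt_zero] at hI
    exact ⟨min_le_of_left_le ((hm (by linarith)).trans hI.1),
      le_max_of_le_right (hI.2.trans (hm (by linarith)))⟩
  rcases lt_or_ge z (n + 1) with hz₁ | hz
  · have hI := concaveApprox_mem_Icc hm hz₀ hz₁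
    exact ⟨min_le_of_left_le hI.1, le_max_of_le_left hI.2⟩
  · have hI : concaveApprox h n z = h (n + 1 + 1 / (n + 1)) := by
      rw [concaveApprox, pwLinInterp_of_le (gridPt_strictMono n).monotone
        ((gridPt_gridLen n).trans_le hz), gridPt_gridLen]
    have h2δ : 2 / (n + 1 : ℝ) = 1 / (n + 1) + 1 / (n + 1) := by ring
    rw [hI]
    exact ⟨min_le_of_right_le (hm (by positivity)), le_max_of_le_left (hm (by linarith))⟩

theorem abs_concaveApprox_le (hm : Monotone h) (hc : ConcaveOn ℝ univ h) (n : ℕ) (z : ℝ) :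
    |concaveApprox h n z| ≤ |h z| + |h 0| + (h 2 - h 0) := by
  obtain ⟨hlo, hhi⟩ := concaveApprox_bounds hm hc n z
  have hδ : 2 / (n + 1 : ℝ) ≤ 2 := by
    rw [div_le_iff₀ (by positivity)]; linarith [n.cast_nonneg (α := ℝ)]
  have hgrowth := hc.le_max_add hm zero_le_two z
  have h2 := hm (by linarith : z + 2 / (n + 1) ≤ z + 2)
  have h20 := hm (zero_le_two : (0 : ℝ) ≤ 2)
  rw [abs_le]
  constructor
  · rcases min_choice (h z) (h 0) with he | he <;> rw [he] at hlo <;>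
      linarith [neg_abs_le (h z), neg_abs_le (h 0), abs_nonneg (h z), abs_nonneg (h 0)]
  · rcases max_choice (h z) (h 0) with he | he <;> rw [he] at hgrowth <;>
    rcases max_choice (h (z + 2 / (n + 1))) (h 0) with he' | he' <;> rw [he'] at hhi <;>
      linarith [le_abs_self (h z), le_abs_self (h 0), abs_nonneg (h z), abs_nonneg (h 0)]

theorem tendsto_concaveApprox (hm : Monotone h) (hcont : Continuous h) (z : ℝ) :
    Tendsto (fun n ↦ concaveApprox h n z) atTop (𝓝 (h z)) := by
  have hlim : Tendsto (fun n : ℕ ↦ h (z + 2 / (n + 1))) atTop (𝓝 (h z)) := by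
    have := (tendsto_one_div_add_atTop_nhds_zero_nat (𝕜 := ℝ)).const_mul 2
    simp only [mul_zero, mul_one_div] at this
    have hz := (tendsto_const_nhds (x := z)).add this
    rw [add_zero] at hz
    exact (hcont.tendsto z).comp hz
  have hev : ∀ᶠ n : ℕ in atTop, concaveApprox h n z ∈ Icc (h z) (h (z + 2 / (n + 1))) := by
    filter_upwards [eventually_gt_atTop ⌈|z|⌉₊] with n hn
    have : |z| < n := Nat.lt_of_ceil_lt hn
    exact concaveApprox_mem_Icc hm (by linarith [neg_abs_le z]) (by linarith [le_abs_self z])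
  exact tendsto_of_tendsto_of_tendsto_of_le_of_le' tendsto_const_nhds hlim
    (hev.mono fun _ h ↦ h.1) (hev.mono fun _ h ↦ h.2)

end Approx

section StopLoss

variable {Ω : Type*} [MeasurableSpace Ω] {μ : Measure Ω} {X Z : Ω → ℝ}

theorem lintegral_ofReal_hingeSum {W : Ω → ℝ} (hW : AEMeasurable W μ) {C : ℝ} {c s : ℕ → ℝ}
    {K : ℕ} (hc : ∀ j, 0 ≤ c j) :
    ∫⁻ ω, ENNReal.ofReal (C - hingeSum C c s K (W ω)) ∂μ
      = ∑ j ∈ range K, ENNReal.ofReal (c j) * ∫⁻ ω, ENNReal.ofReal (s j - W ω) ∂μ := by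
  have hsplit : ∀ ω, ENNReal.ofReal (C - hingeSum C c s K (W ω))
      = ∑ j ∈ range K, ENNReal.ofReal (c j) * ENNReal.ofReal (s j - W ω) := fun ω ↦ by
    rw [hingeSum, sub_sub_cancel,
      ENNReal.ofReal_sum_of_nonneg fun j _ ↦ mul_nonneg (hc j) (posPart_nonneg _)]
    refine sum_congr rfl fun j _ ↦ ?_
    rw [ENNReal.ofReal_mul (hc j)]
    simp [posPart]
  simp_rw [hsplit]
  rw [lintegral_finsetSum' _ fun j _ ↦ ((hW.const_sub _).ennreal_ofReal.const_mul _)]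
  exact sum_congr rfl fun j _ ↦ lintegral_const_mul' _ _ ENNReal.ofReal_ne_top

theorem integral_hingeSum_le [IsFiniteMeasure μ] (hX : AEMeasurable X μ) (hZ : AEMeasurable Z μ)
    (hlevel : ∀ s, ∫⁻ ω, ENNReal.ofReal (s - Z ω) ∂μ ≤ ∫⁻ ω, ENNReal.ofReal (s - X ω) ∂μ)
    {C : ℝ} {c s : ℕ → ℝ} {K : ℕ} (hc : ∀ j, 0 ≤ c j)
    (hXi : Integrable (fun ω ↦ hingeSum C c s K (X ω)) μ)
    (hZi : Integrable (fun ω ↦ hingeSum C c s K (Z ω)) μ) :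
    ∫ ω, hingeSum C c s K (X ω) ∂μ ≤ ∫ ω, hingeSum C c s K (Z ω) ∂μ := by
  have hPX := (integrable_const C).sub hXi
  have hPZ := (integrable_const C).sub hZi
  have hP_nonneg : ∀ W : Ω → ℝ, 0 ≤ᵐ[μ] fun ω ↦ C - hingeSum C c s K (W ω) := fun W ↦
    ae_of_all _ fun ω ↦ by
      simp only [hingeSum, sub_sub_cancel, Pi.zero_apply]
      exact sum_nonneg fun j _ ↦ mul_nonneg (hc j) (posPart_nonneg _)
  have hP : ∫ ω, C - hingeSum C c s K (Z ω) ∂μ ≤ ∫ ω, C - hingeSum C c s K (X ω) ∂μ := by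
    rw [integral_eq_lintegral_of_nonneg_ae (hP_nonneg Z) hPZ.1,
      integral_eq_lintegral_of_nonneg_ae (hP_nonneg X) hPX.1]
    refine ENNReal.toReal_mono hPX.lintegral_lt_top.ne ?_
    rw [lintegral_ofReal_hingeSum hX hc, lintegral_ofReal_hingeSum hZ hc]
    exact sum_le_sum fun j _ ↦ mul_le_mul_of_nonneg_left (hlevel (s j)) zero_le
  rw [integral_sub (integrable_const C) hXi, integral_sub (integrable_const C) hZi] at hP
  linarith

theorem integrable_concaveApprox_comp [IsFiniteMeasure μ] {h : ℝ → ℝ} (hm : Monotone h)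
    (hc : ConcaveOn ℝ univ h)
    {W : Ω → ℝ} (hW : AEMeasurable W μ) (hhW : Integrable (fun ω ↦ h (W ω)) μ) (n : ℕ) :
    Integrable (fun ω ↦ concaveApprox h n (W ω)) μ :=
  ((hhW.abs.add (integrable_const _)).add (integrable_const _)).mono'
    ((continuous_concaveApprox h n).comp_aestronglyMeasurable hW.aestronglyMeasurable)
    (ae_of_all _ fun ω ↦ abs_concaveApprox_le hm hc n (W ω))

theorem tendsto_integral_concaveApprox_comp [IsFiniteMeasure μ] {h : ℝ → ℝ} (hm : Monotone h)
    (hc : ConcaveOn ℝ univ h) {W : Ω → ℝ} (hW : AEMeasurable W μ)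
    (hhW : Integrable (fun ω ↦ h (W ω)) μ) :
    Tendsto (fun n ↦ ∫ ω, concaveApprox h n (W ω) ∂μ) atTop (𝓝 (∫ ω, h (W ω) ∂μ)) :=
  tendsto_integral_of_dominated_convergence _
    (fun n ↦ (integrable_concaveApprox_comp hm hc hW hhW n).1)
    ((hhW.abs.add (integrable_const _)).add (integrable_const _))
    (fun n ↦ ae_of_all _ fun ω ↦ abs_concaveApprox_le hm hc n (W ω))
    (ae_of_all _ fun ω ↦ tendsto_concaveApprox hm
      (continuousOn_univ.1 (hc.continuousOn isOpen_univ)) (W ω))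

theorem integral_comp_le_of_lintegral_le [IsFiniteMeasure μ] (hX : AEMeasurable X μ)
    (hZ : AEMeasurable Z μ)
    (hlevel : ∀ s, ∫⁻ ω, ENNReal.ofReal (s - Z ω) ∂μ ≤ ∫⁻ ω, ENNReal.ofReal (s - X ω) ∂μ)
    {h : ℝ → ℝ} (hm : Monotone h) (hc : ConcaveOn ℝ univ h)
    (hhX : Integrable (fun ω ↦ h (X ω)) μ) (hhZ : Integrable (fun ω ↦ h (Z ω)) μ) :
    ∫ ω, h (X ω) ∂μ ≤ ∫ ω, h (Z ω) ∂μ :=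
  le_of_tendsto_of_tendsto' (tendsto_integral_concaveApprox_comp hm hc hX hhX)
    (tendsto_integral_concaveApprox_comp hm hc hZ hhZ) fun n ↦
      integral_hingeSum_le hX hZ hlevel
        (fun j ↦ sub_nonneg.2 (chordSlope_succ_le (fun _ _ hxy ↦ hm (by linarith))
          (hc.comp_add_const _) (gridPt_strictMono n) j))
        (integrable_concaveApprox_comp hm hc hX hhX n)
        (integrable_concaveApprox_comp hm hc hZ hhZ n)

theorem lintegral_ofReal_sub_eq_lintegral_measure [SFinite μ] {V W : Ω → ℝ}
    (hV : AEMeasurable V μ) (hW : AEMeasurable W μ) :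
    ∫⁻ ω, ENNReal.ofReal (W ω - V ω) ∂μ = ∫⁻ r, μ {ω | V ω ≤ r ∧ r < W ω} := by
  have key : ∀ V W : Ω → ℝ, Measurable V → Measurable W →
      ∫⁻ ω, ENNReal.ofReal (W ω - V ω) ∂μ = ∫⁻ r, μ {ω | V ω ≤ r ∧ r < W ω} := by
    intro V W hV hW
    have hP : MeasurableSet {p : Ω × ℝ | V p.1 ≤ p.2 ∧ p.2 < W p.1} :=
      (measurableSet_le (hV.comp measurable_fst) measurable_snd).inter
        (measurableSet_lt measurable_snd (hW.comp measurable_fst))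
    simp_rw [← Real.volume_Ico]
    exact (Measure.prod_apply hP).symm.trans (Measure.prod_apply_symm hP)
  have hae := hV.ae_eq_mk.and hW.ae_eq_mk
  rw [lintegral_congr_ae (hae.mono fun ω h ↦ by rw [h.1, h.2]),
    key _ _ hV.measurable_mk hW.measurable_mk]
  refine lintegral_congr fun r ↦ measure_congr (hae.mono fun ω h ↦ ?_)
  change (_ ∧ _) = (_ ∧ _)
  rw [h.1, h.2]

end StopLoss

def quantile (F : ℝ → ℝ) (u : ℝ) : ℝ := sInf {y | u ≤ F y}

namespace IsCDF

variable {F : ℝ → ℝ} {u : ℝ}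

theorem quantile_le_iff (hF : IsCDF F) (hu : u ∈ Ioo (0 : ℝ) 1) (y : ℝ) :
    quantile F u ≤ y ↔ u ≤ F y := by
  obtain ⟨hmono, hright, hbot, htop⟩ := hF
  have hne : {x | u ≤ F x}.Nonempty := (htop.eventually (eventually_ge_nhds hu.2)).exists
  have hbdd : BddBelow {x | u ≤ F x} := by
    obtain ⟨x₀, hx₀⟩ := (hbot.eventually (eventually_lt_nhds hu.1)).exists
    exact ⟨x₀, fun x hx ↦ le_of_not_gt fun hlt ↦ (hx.trans (hmono hlt.le)).not_gt hx₀⟩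
  have hmem : u ≤ F (quantile F u) :=
    ge_of_tendsto ((hright _).mono_left (nhdsWithin_mono _ Ioi_subset_Ici_self))
      (eventually_nhdsWithin_of_forall fun x hx ↦
        let ⟨v, hv, hvx⟩ := exists_lt_of_csInf_lt hne hx
        hv.trans (hmono hvx.le))
  exact ⟨fun h ↦ hmem.trans (hmono h), fun h ↦ csInf_le hbdd h⟩

theorem lt_quantile_iff (hF : IsCDF F) (hu : u ∈ Ioo (0 : ℝ) 1) (y : ℝ) :
    y < quantile F u ↔ F y < u := by
  simpa only [not_le] using (hF.quantile_le_iff hu y).not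

theorem monotoneOn_quantile (hF : IsCDF F) : MonotoneOn (quantile F) (Ioo 0 1) :=
  fun _ hu _ hv huv ↦ (hF.quantile_le_iff hu _).2 (huv.trans ((hF.quantile_le_iff hv _).1 le_rfl))

end IsCDF

section UniformCoupling

variable {Ω : Type*} [MeasurableSpace Ω] {μ : Measure Ω} {U : Ω → ℝ} {F F₀ F₁ : ℝ → ℝ}
  {a b : ℝ}

theorem measure_preimage_Ioo_of_map_eq (hU : Measurable U)
    (hUlaw : μ.map U = volume.restrict (Ioo 0 1)) {m : ℝ} (hm : 0 ≤ m) (hb : b ≤ 1) :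
    μ (U ⁻¹' Ioo m b) = ENNReal.ofReal (b - m) := by
  rw [← Measure.map_apply hU measurableSet_Ioo, hUlaw, Measure.restrict_apply measurableSet_Ioo,
    inter_eq_left.2 (Ioo_subset_Ioo hm hb), Real.volume_Ioo]

theorem aemeasurable_comp_restrict_preimage (hU : Measurable U)
    (hUlaw : μ.map U = volume.restrict (Ioo 0 1)) (ha : 0 ≤ a) (hb : b ≤ 1) {f : ℝ → ℝ}
    (hf : AEMeasurable f (volume.restrict (Ioo a b))) :
    AEMeasurable (fun ω ↦ f (U ω)) (μ.restrict (U ⁻¹' Ioo a b)) := by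
  have hmap : (μ.restrict (U ⁻¹' Ioo a b)).map U = volume.restrict (Ioo a b) := by
    rw [← Measure.restrict_map hU measurableSet_Ioo, hUlaw,
      Measure.restrict_restrict measurableSet_Ioo, inter_eq_left.2 (Ioo_subset_Ioo ha hb)]
  exact (hmap ▸ hf).comp_measurable hU

theorem aemeasurable_quantile_comp (hF : IsCDF F) (hU : Measurable U)
    (hUlaw : μ.map U = volume.restrict (Ioo 0 1)) (ha : 0 ≤ a) (hb : b ≤ 1) :
    AEMeasurable (fun ω ↦ quantile F (U ω)) (μ.restrict (U ⁻¹' Ioo a b)) :=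
  aemeasurable_comp_restrict_preimage hU hUlaw ha hb <| aemeasurable_restrict_of_monotoneOn
    measurableSet_Ioo (hF.monotoneOn_quantile.mono (Ioo_subset_Ioo ha hb))

theorem aemeasurable_quantile_sub_comp (hF : IsCDF F) (hU : Measurable U)
    (hUlaw : μ.map U = volume.restrict (Ioo 0 1)) (ha : 0 ≤ a) (hb : b ≤ 1) :
    AEMeasurable (fun ω ↦ quantile F (b - U ω)) (μ.restrict (U ⁻¹' Ioo a b)) :=
  aemeasurable_comp_restrict_preimage hU hUlaw ha hb <| aemeasurable_restrict_of_antitoneOn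
    measurableSet_Ioo fun u hu v hv huv ↦ hF.monotoneOn_quantile
      ⟨by linarith [hv.2], by linarith [hv.1]⟩ ⟨by linarith [hu.2], by linarith [hu.1]⟩
      (by linarith)

theorem measure_inter_le_measure_inter_quantile [IsFiniteMeasure μ] (hF₀ : IsCDF F₀)
    (hF₁ : IsCDF F₁) (hU : Measurable U) (hUlaw : μ.map U = volume.restrict (Ioo 0 1))
    {Y : Ω → ℝ} (hYlaw : ∀ y, (μ {ω | Y ω ≤ y}).toReal = F₁ y) (ha : 0 ≤ a) (hb : b ≤ 1)
    (r s : ℝ) :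
    μ ({ω | Y ω ≤ r ∧ r < s + quantile F₀ (U ω)} ∩ U ⁻¹' Ioo a b)
      ≤ μ ({ω | quantile F₁ (b - U ω) ≤ r ∧ r < s + quantile F₀ (U ω)} ∩ U ⁻¹' Ioo a b) := by
  have hQ₀ : ∀ u ∈ Ioo a b, (r < s + quantile F₀ u ↔ F₀ (r - s) < u) := fun u hu ↦ by
    rw [← sub_lt_iff_lt_add', hF₀.lt_quantile_iff ⟨ha.trans_lt hu.1, hu.2.trans_le hb⟩]
  have hQ₁ : ∀ u ∈ Ioo a b, (quantile F₁ (b - u) ≤ r ↔ b - F₁ r ≤ u) := fun u hu ↦ by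
    rw [hF₁.quantile_le_iff ⟨by linarith [hu.2], by linarith [hu.1]⟩, sub_le_comm]
  set m := max a (F₀ (r - s))
  calc _ ≤ min (ENNReal.ofReal (F₁ r)) (ENNReal.ofReal (b - m)) := by
        refine le_min ?_ ?_
        · rw [← hYlaw r, ENNReal.ofReal_toReal (measure_ne_top _ _)]
          exact measure_mono fun ω hω ↦ hω.1.1
        · rw [← measure_preimage_Ioo_of_map_eq hU hUlaw (le_max_of_le_left ha) hb]
          exact measure_mono fun ω hω ↦ ⟨max_lt hω.2.1 ((hQ₀ _ hω.2).1 hω.1.2), hω.2.2⟩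
    _ = μ (U ⁻¹' Ioo (max m (b - F₁ r)) b) := by
        rw [measure_preimage_Ioo_of_map_eq hU hUlaw (le_max_of_le_left (le_max_of_le_left ha)) hb,
          sub_sup m (b - F₁ r) b, sub_sub_cancel, ENNReal.ofReal_min, min_comm]
    _ ≤ _ := measure_mono fun ω hω ↦ by
        have hm : m < U ω := (le_max_left _ _).trans_lt hω.1
        have hω' : U ω ∈ Ioo a b := ⟨(le_max_left _ _).trans_lt hm, hω.2⟩
        exact ⟨⟨(hQ₁ _ hω').2 ((le_max_right _ _).trans hω.1.le),
          (hQ₀ _ hω').2 ((le_max_right _ _).trans_lt hm)⟩, hω'⟩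

theorem lintegral_stopLoss_le [IsFiniteMeasure μ] (hF₀ : IsCDF F₀) (hF₁ : IsCDF F₁)
    (hU : Measurable U) (hUlaw : μ.map U = volume.restrict (Ioo 0 1)) {Y : Ω → ℝ}
    (hY : Measurable Y) (hYlaw : ∀ y, (μ {ω | Y ω ≤ y}).toReal = F₁ y) (ha : 0 ≤ a)
    (hb : b ≤ 1) (s : ℝ) :
    ∫⁻ ω in U ⁻¹' Ioo a b, ENNReal.ofReal (s - (Y ω - quantile F₀ (U ω))) ∂μ
      ≤ ∫⁻ ω in U ⁻¹' Ioo a b,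
          ENNReal.ofReal (s - (quantile F₁ (b - U ω) - quantile F₀ (U ω))) ∂μ := by
  have hA : MeasurableSet (U ⁻¹' Ioo a b) := hU measurableSet_Ioo
  have hQ₀ : AEMeasurable (fun ω ↦ s + quantile F₀ (U ω)) (μ.restrict (U ⁻¹' Ioo a b)) :=
    aemeasurable_const.add (aemeasurable_quantile_comp hF₀ hU hUlaw ha hb)
  simp_rw [sub_sub_eq_add_sub]
  rw [lintegral_ofReal_sub_eq_lintegral_measure hY.aemeasurable hQ₀,
    lintegral_ofReal_sub_eq_lintegral_measure
      (aemeasurable_quantile_sub_comp hF₁ hU hUlaw ha hb) hQ₀]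
  refine lintegral_mono fun r ↦ ?_
  rw [Measure.restrict_apply' hA, Measure.restrict_apply' hA]
  exact measure_inter_le_measure_inter_quantile hF₀ hF₁ hU hUlaw hYlaw ha hb r s

end UniformCoupling

theorem sosd_lower_bound_general
    {Ω : Type*} [MeasurableSpace Ω] (μ : Measure Ω) [IsProbabilityMeasure μ]
    (U Y1 : Ω → ℝ) (F0 F1 Q0 Q1 : ℝ → ℝ)
    (hF0 : IsCDF F0) (hF1 : IsCDF F1)
    (hQ0 : ∀ u, Q0 u = sInf {y : ℝ | u ≤ F0 y})
    (hQ1 : ∀ u, Q1 u = sInf {y : ℝ | u ≤ F1 y})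
    (hU : Measurable U) (hUlaw : μ.map U = volume.restrict (Set.Ioo (0:ℝ) 1))
    (hY1 : Measurable Y1) (hY1law : ∀ y, (μ {ω | Y1 ω ≤ y}).toReal = F1 y)
    (a b : ℝ) (ha : 0 ≤ a) (hb : b ≤ 1)
    (h : ℝ → ℝ) (hh_mono : Monotone h) (hh_conc : ConcaveOn ℝ Set.univ h)
    (hint1 : IntegrableOn (fun ω => h (Q1 (b - U ω) - Q0 (U ω))) {ω | a < U ω ∧ U ω < b} μ)
    (hint2 : IntegrableOn (fun ω => h (Y1 ω - Q0 (U ω))) {ω | a < U ω ∧ U ω < b} μ) :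
    (∫ ω in {ω | a < U ω ∧ U ω < b}, h (Q1 (b - U ω) - Q0 (U ω)) ∂μ) ≤
      ∫ ω in {ω | a < U ω ∧ U ω < b}, h (Y1 ω - Q0 (U ω)) ∂μ := by
  obtain rfl : Q0 = quantile F0 := funext hQ0
  obtain rfl : Q1 = quantile F1 := funext hQ1
  have hQ0U := aemeasurable_quantile_comp hF0 hU hUlaw ha hb
  exact integral_comp_le_of_lintegral_le
    ((aemeasurable_quantile_sub_comp hF1 hU hUlaw ha hb).sub hQ0U) (hY1.aemeasurable.sub hQ0U)
    (lintegral_stopLoss_le hF0 hF1 hU hUlaw hY1 hY1law ha hb) hh_mono hh_conc hint1 hint2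

theorem sosd_lower_bound
    {Ω : Type*} [MeasurableSpace Ω] (μ : Measure Ω) [IsProbabilityMeasure μ]
    (U Y1 : Ω → ℝ) (F0 F1 Q0 Q1 : ℝ → ℝ)
    (hF0 : IsCDF F0) (hF1 : IsCDF F1)
    (hQ0 : ∀ u, Q0 u = sInf {y : ℝ | u ≤ F0 y})
    (hQ1 : ∀ u, Q1 u = sInf {y : ℝ | u ≤ F1 y})
    (hU : Measurable U) (hUlaw : μ.map U = volume.restrict (Set.Ioo (0:ℝ) 1))
    (hY1 : Measurable Y1) (hY1law : ∀ y, (μ {ω | Y1 ω ≤ y}).toReal = F1 y)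
    (a b : ℝ) (ha : 0 ≤ a) (hab : a < b) (hb : b ≤ 1)
    (h : ℝ → ℝ) (hh_mono : Monotone h) (hh_conc : ConcaveOn ℝ Set.univ h)
    (hint1 : IntegrableOn (fun ω => h (Q1 (b - U ω) - Q0 (U ω))) {ω | a < U ω ∧ U ω < b} μ)
    (hint2 : IntegrableOn (fun ω => h (Y1 ω - Q0 (U ω))) {ω | a < U ω ∧ U ω < b} μ) :
    (∫ ω in {ω | a < U ω ∧ U ω < b}, h (Q1 (b - U ω) - Q0 (U ω)) ∂μ) ≤
      ∫ ω in {ω | a < U ω ∧ U ω < b}, h (Y1 ω - Q0 (U ω)) ∂μ :=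
  sosd_lower_bound_general μ U Y1 F0 F1 Q0 Q1 hF0 hF1 hQ0 hQ1 hU hUlaw hY1 hY1law a b ha hb h
    hh_mono hh_conc hint1 hint2
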